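/- Let X and Y be real normed vector spaces with X infinite-dimensional, let T : X → Y be a bounded linear operator, and let E be a dense linear subspace of X. Then ∇(T|_E) = ∇(T), where ∇(T|_E) is computed with E in place of X; i.e., the quantity ∇ is densely invariant for bounded operators. -/

import Mathlib

/-- `inf_{m ∈ S_M} ‖Tm‖`, the infimum of `‖Tm‖` over the unit sphere of a subspace `M`. -/
noncomputable def sphereInf {X Y : Type*} [NormedAddCommGroup X] [NormedSpace ℝ X]
    [NormedAddCommGroup Y] [NormedSpace ℝ Y] (T : X →L[ℝ] Y) (M : Submodule ℝ X) : ℝ :=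
  sInf {s : ℝ | ∃ m : X, m ∈ M ∧ ‖m‖ = 1 ∧ s = ‖T m‖}

/-- `τ(T) = sup_{M ∈ I(X)} inf_{m ∈ S_M} ‖Tm‖`. -/
noncomputable def opTau {X Y : Type*} [NormedAddCommGroup X] [NormedSpace ℝ X]
    [NormedAddCommGroup Y] [NormedSpace ℝ Y] (T : X →L[ℝ] Y) : ℝ :=
  sSup {r : ℝ | ∃ M : Submodule ℝ X, ¬ FiniteDimensional ℝ M ∧ r = sphereInf T M}

/-- `∇(T) = inf_{M ∈ I(X)} τ(T|_M)`. -/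
noncomputable def opNabla {X Y : Type*} [NormedAddCommGroup X] [NormedSpace ℝ X]
    [NormedAddCommGroup Y] [NormedSpace ℝ Y] (T : X →L[ℝ] Y) : ℝ :=
  sInf {r : ℝ | ∃ M : Submodule ℝ X, ¬ FiniteDimensional ℝ M ∧
    r = opTau (T.comp M.subtypeL)}

/-!
If `M ⊆ X` is infinite-dimensional, it carries a biorthogonal sequence `(xₙ, fₙ)`, and density
gives `eₙ ∈ E` with `∑ ‖fₙ‖ ‖eₙ - xₙ‖ ≤ δ`. The map `∑ cₙ xₙ ↦ ∑ cₙ eₙ` then moves every vector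
by at most `δ` times its norm, so every infinite-dimensional subspace of `N = span {eₙ} ⊆ E` is
the image of one of `M` whose unit vectors lie within `2δ` of unit vectors of the image. Hence
`τ(T|_N) ≤ τ(T|_M) + 2δ‖T‖`, and `∇(T|_E) ≤ ∇(T)`; the reverse inequality holds because
`∇(T|_E)` is an infimum over fewer subspaces.
-/

open Submodule

theorem finiteDimensional_map_iff_of_injective {K V W : Type*} [DivisionRing K]
    [AddCommGroup V] [Module K V] [AddCommGroup W] [Module K W] {f : V →ₗ[K] W}
    (hf : Function.Injective f) (p : Submodule K V) :
    FiniteDimensional K (p.map f) ↔ FiniteDimensional K p :=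
  (Module.Finite.equiv_iff (p.equivMapOfInjective f hf)).symm

theorem Submodule.ne_bot_of_not_finiteDimensional {K V : Type*} [DivisionRing K] [AddCommGroup V]
    [Module K V] {M : Submodule K V} (hM : ¬ FiniteDimensional K M) : M ≠ ⊥ := by
  rintro rfl
  exact hM inferInstance

theorem Submodule.exists_mem_ker_notMem {K V Z : Type*} [DivisionRing K]
    [AddCommGroup V] [Module K V] [AddCommGroup Z] [Module K Z] [FiniteDimensional K Z]
    {M : Submodule K V} (hM : ¬ FiniteDimensional K M) (φ : V →ₗ[K] Z)
    (F : Submodule K V) [FiniteDimensional K F] :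
    ∃ y ∈ M, φ y = 0 ∧ y ∉ F := by
  by_contra! h
  refine hM ((fg_iff_finiteDimensional M).1 (fg_of_fg_map_of_fg_inf_ker φ ?_ ?_))
  · exact IsNoetherian.noetherian _
  · exact FG.of_le_of_isNoetherian (T := F) fun y hy => h y hy.1 hy.2

theorem Submodule.image_map_subtype_setOf_le {K V : Type*} [DivisionRing K] [AddCommGroup V]
    [Module K V] (P : Submodule K V) (M : Submodule K P) :
    map P.subtype '' {W | W ≤ M ∧ ¬ FiniteDimensional K W} =
      {W | W ≤ M.map P.subtype ∧ ¬ FiniteDimensional K W} := by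
  ext W
  constructor
  · rintro ⟨U, ⟨hUM, hU⟩, rfl⟩
    exact ⟨map_mono hUM, (finiteDimensional_map_iff_of_injective P.injective_subtype U).not.2 hU⟩
  · rintro ⟨hWM, hW⟩
    have hmap : (W.comap P.subtype).map P.subtype = W :=
      map_comap_eq_self (by simpa using hWM.trans (LinearMap.map_le_range (f := P.subtype)))
    refine ⟨W.comap P.subtype, ⟨?_, ?_⟩, hmap⟩
    · simpa [comap_map_eq_of_injective P.injective_subtype] using comap_mono (f := P.subtype) hWM
    · rwa [← finiteDimensional_map_iff_of_injective P.injective_subtype, hmap]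

theorem csInf_image_eq_of_forall_exists_le_add {α : Type*} {f : α → ℝ} {S S' : Set α}
    (hS' : S' ⊆ S) (hf : BddBelow (f '' S)) (h : ∀ a ∈ S, ∀ ε > 0, ∃ b ∈ S', f b ≤ f a + ε) :
    sInf (f '' S') = sInf (f '' S) := by
  rcases S.eq_empty_or_nonempty with rfl | ⟨a₀, ha₀⟩
  · rw [Set.subset_empty_iff.1 hS']
  obtain ⟨b₀, hb₀, -⟩ := h a₀ ha₀ 1 one_pos
  refine le_antisymm ?_ (csInf_le_csInf hf ⟨_, b₀, hb₀, rfl⟩ (Set.image_mono hS'))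
  refine le_csInf ⟨_, a₀, ha₀, rfl⟩ ?_
  rintro _ ⟨a, ha, rfl⟩
  refine le_of_forall_pos_le_add fun ε hε => ?_
  obtain ⟨b, hb, hba⟩ := h a ha ε hε
  exact (csInf_le (hf.mono (Set.image_mono hS')) ⟨b, hb, rfl⟩).trans hba

section Biorthogonal

variable {ι X : Type*} [NormedAddCommGroup X] [NormedSpace ℝ X] [DecidableEq ι]
  {x e : ι → X} {f : ι → StrongDual ℝ X}

theorem exists_dual_eq_one_forall_eq_zero {F : Submodule ℝ X} (hF : IsClosed (F : Set X))
    {y : X} (hy : y ∉ F) : ∃ g : StrongDual ℝ X, g y = 1 ∧ ∀ x ∈ F, g x = 0 := by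
  have := hF
  obtain ⟨g, hg⟩ := SeparatingDual.exists_eq_one (R := ℝ) (x := F.mkQ y)
    (by simpa [Submodule.Quotient.mk_eq_zero] using hy)
  exact ⟨g.comp F.mkQL, hg, fun x hx => by simp [(Submodule.Quotient.mk_eq_zero F).2 hx]⟩

theorem exists_biorthogonal_seq {M : Submodule ℝ X} (hM : ¬ FiniteDimensional ℝ M) :
    ∃ (x : ℕ → X) (f : ℕ → StrongDual ℝ X), (∀ n, x n ∈ M) ∧
      ∀ m n, f m (x n) = if m = n then 1 else 0 := by
  classical
  let r : X × StrongDual ℝ X → X × StrongDual ℝ X → Prop := fun p q => p.2 q.1 = 0 ∧ q.2 p.1 = 0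
  have : Std.Symm r := ⟨fun _ _ h => h.symm⟩
  obtain ⟨s, hsP, hsr⟩ := exists_seq_of_forall_finset_exists' (fun p => p.1 ∈ M ∧ p.2 p.1 = 1) r
    fun s _ => by
      obtain ⟨y, hyM, hyker, hyF⟩ := exists_mem_ker_notMem hM
        (LinearMap.pi fun p : s => (p.1.2 : X →ₗ[ℝ] ℝ)) (span ℝ (s.image Prod.fst : Set X))
      obtain ⟨g, hgy, hgF⟩ := exists_dual_eq_one_forall_eq_zero
        (span ℝ (s.image Prod.fst : Set X)).closed_of_finiteDimensional hyF
      refine ⟨(y, g), ⟨hyM, hgy⟩, fun p hp => ⟨congrFun hyker ⟨p, hp⟩, hgF _ ?_⟩⟩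
      exact subset_span (Finset.mem_image_of_mem _ hp)
  refine ⟨fun n => (s n).1, fun n => (s n).2, fun n => (hsP n).1, fun m n => ?_⟩
  split_ifs with h
  · exact h ▸ (hsP m).2
  · exact (hsr h).1

theorem apply_linearCombination_of_biorthogonal
    (hxf : ∀ m n, f m (x n) = if m = n then 1 else 0) (c : ι →₀ ℝ) (n : ι) :
    f n (Finsupp.linearCombination ℝ x c) = c n := by
  simp [Finsupp.linearCombination_apply, map_finsuppSum, hxf, Finsupp.sum_ite_eq, eq_comm]

theorem linearIndependent_of_biorthogonal (hxf : ∀ m n, f m (x n) = if m = n then 1 else 0) :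
    LinearIndependent ℝ x := fun c c' h => Finsupp.ext fun n => by
  rw [← apply_linearCombination_of_biorthogonal hxf, h, apply_linearCombination_of_biorthogonal hxf]

theorem norm_linearCombination_sub_le (hxf : ∀ m n, f m (x n) = if m = n then 1 else 0)
    {δ : ℝ} (he : ∀ s : Finset ι, ∑ n ∈ s, ‖f n‖ * ‖e n - x n‖ ≤ δ) (c : ι →₀ ℝ) :
    ‖Finsupp.linearCombination ℝ e c - Finsupp.linearCombination ℝ x c‖ ≤
      δ * ‖Finsupp.linearCombination ℝ x c‖ := by
  set w := Finsupp.linearCombination ℝ x c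
  calc ‖Finsupp.linearCombination ℝ e c - w‖ = ‖∑ n ∈ c.support, c n • (e n - x n)‖ := by
        simp [w, Finsupp.linearCombination_apply, Finsupp.sum, smul_sub]
    _ ≤ ∑ n ∈ c.support, ‖f n‖ * ‖e n - x n‖ * ‖w‖ := by
        refine norm_sum_le_of_le _ fun n _ => ?_
        rw [norm_smul, ← apply_linearCombination_of_biorthogonal hxf c n, mul_right_comm]
        gcongr
        exact (f n).le_opNorm w
    _ = (∑ n ∈ c.support, ‖f n‖ * ‖e n - x n‖) * ‖w‖ := (Finset.sum_mul ..).symm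
    _ ≤ δ * ‖w‖ := by gcongr; exact he _

end Biorthogonal

theorem Dense.exists_seq_forall_sum_mul_norm_sub_le {X : Type*} [NormedAddCommGroup X]
    {S : Set X} (hS : Dense S) (x : ℕ → X) (a : ℕ → ℝ) {δ : ℝ} (hδ : 0 < δ) :
    ∃ e : ℕ → X, (∀ n, e n ∈ S) ∧ ∀ s : Finset ℕ, ∑ n ∈ s, a n * ‖e n - x n‖ ≤ δ := by
  have (n : ℕ) : ∃ y ∈ S, a n * ‖y - x n‖ ≤ δ / 2 / 2 ^ n := by
    have hpos : 0 < δ / 2 / 2 ^ n / (|a n| + 1) := by positivity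
    obtain ⟨y, hy, hyS⟩ := Metric.dense_iff.1 hS (x n) _ hpos
    refine ⟨y, hyS, ?_⟩
    rw [Metric.mem_ball, dist_eq_norm, lt_div_iff₀ (by positivity)] at hy
    nlinarith [le_abs_self (a n), norm_nonneg (y - x n)]
  choose e heS he using this
  refine ⟨e, heS, fun s => ?_⟩
  calc ∑ n ∈ s, a n * ‖e n - x n‖ ≤ ∑ n ∈ s, δ / 2 / 2 ^ n := Finset.sum_le_sum fun n _ => he n
    _ ≤ δ := sum_le_hasSum s (fun n _ => by positivity) (hasSum_geometric_two' δ)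

theorem injective_of_norm_sub_le_mul {Z X : Type*} [AddCommGroup Z] [Module ℝ Z]
    [NormedAddCommGroup X] [NormedSpace ℝ X] {A B : Z →ₗ[ℝ] X} {δ : ℝ} (hδ : δ < 1)
    (hAB : ∀ z, ‖B z - A z‖ ≤ δ * ‖A z‖) (hA : Function.Injective A) : Function.Injective B := by
  refine (injective_iff_map_eq_zero B).2 fun z hz => (injective_iff_map_eq_zero A).1 hA z ?_
  have := hAB z
  rw [hz, zero_sub, norm_neg] at this
  exact norm_le_zero_iff.1 (by nlinarith [norm_nonneg (A z)])

theorem NormedSpace.norm_normalize_sub_le {X : Type*} [NormedAddCommGroup X] [NormedSpace ℝ X]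
    {v w : X} (hw : ‖w‖ = 1) : ‖normalize v - w‖ ≤ 2 * ‖v - w‖ := by
  by_cases hv : v = 0
  · simp [hv, hw]
  have hsub : normalize v - v = (1 - ‖v‖) • normalize v := by
    rw [sub_smul, one_smul, norm_smul_normalize]
  calc ‖normalize v - w‖ ≤ ‖normalize v - v‖ + ‖v - w‖ := norm_sub_le_norm_sub_add_norm_sub _ _ _
    _ = |‖w‖ - ‖v‖| + ‖v - w‖ := by
        rw [hsub, norm_smul, norm_normalize_eq_one_iff.2 hv, mul_one, Real.norm_eq_abs, hw]
    _ ≤ ‖w - v‖ + ‖v - w‖ := by gcongr; exact abs_norm_sub_norm_le w v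
    _ = 2 * ‖v - w‖ := by rw [norm_sub_rev]; ring

theorem Submodule.exists_mem_norm_eq_one {X : Type*} [NormedAddCommGroup X] [NormedSpace ℝ X]
    {M : Submodule ℝ X} (hM : M ≠ ⊥) : ∃ m ∈ M, ‖m‖ = 1 := by
  have := (Submodule.nontrivial_iff_ne_bot).2 hM
  obtain ⟨m, hm⟩ := exists_norm_eq M zero_le_one
  exact ⟨m, m.2, hm⟩

section Tau

variable {X Y : Type*} [NormedAddCommGroup X] [NormedSpace ℝ X]
  [NormedAddCommGroup Y] [NormedSpace ℝ Y] (T : X →L[ℝ] Y)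

noncomputable def tauOn (M : Submodule ℝ X) : ℝ :=
  sSup (sphereInf T '' {V | V ≤ M ∧ ¬ FiniteDimensional ℝ V})

theorem sphereInf_nonneg (M : Submodule ℝ X) : 0 ≤ sphereInf T M :=
  Real.sInf_nonneg (by rintro _ ⟨m, -, -, rfl⟩; positivity)

theorem sphereInf_le_norm_apply {M : Submodule ℝ X} {m : X} (hm : m ∈ M) (hm1 : ‖m‖ = 1) :
    sphereInf T M ≤ ‖T m‖ :=
  csInf_le ⟨0, by rintro _ ⟨m, -, -, rfl⟩; positivity⟩ ⟨m, hm, hm1, rfl⟩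

theorem sphereInf_le_opNorm {M : Submodule ℝ X} (hM : M ≠ ⊥) : sphereInf T M ≤ ‖T‖ := by
  obtain ⟨m, hm, hm1⟩ := M.exists_mem_norm_eq_one hM
  simpa [hm1] using (sphereInf_le_norm_apply T hm hm1).trans (T.le_opNorm m)

theorem sphereInf_le_add_of_forall_exists_near {V W : Submodule ℝ X} (hW : W ≠ ⊥) {η : ℝ}
    (h : ∀ w ∈ W, ‖w‖ = 1 → ∃ v ∈ V, ‖v‖ = 1 ∧ ‖v - w‖ ≤ η) :
    sphereInf T V ≤ sphereInf T W + ‖T‖ * η := by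
  obtain ⟨w₀, hw₀, hw₀1⟩ := W.exists_mem_norm_eq_one hW
  rw [← sub_le_iff_le_add]
  refine le_csInf ⟨_, w₀, hw₀, hw₀1, rfl⟩ ?_
  rintro _ ⟨w, hw, hw1, rfl⟩
  obtain ⟨v, hv, hv1, hvw⟩ := h w hw hw1
  have hT : ‖T v‖ - ‖T w‖ ≤ ‖T‖ * η := by
    calc ‖T v‖ - ‖T w‖ ≤ ‖T (v - w)‖ := by rw [map_sub]; exact norm_sub_norm_le _ _
      _ ≤ ‖T‖ * ‖v - w‖ := T.le_opNorm _
      _ ≤ ‖T‖ * η := by gcongr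
  linarith [sphereInf_le_norm_apply T hv hv1]

theorem sphereInf_map_le_add {Z : Type*} [AddCommGroup Z] [Module ℝ Z] {A B : Z →ₗ[ℝ] X}
    {δ : ℝ} (hδ : δ < 1) (hAB : ∀ z, ‖B z - A z‖ ≤ δ * ‖A z‖) {C : Submodule ℝ Z}
    (hC : C.map A ≠ ⊥) : sphereInf T (C.map B) ≤ sphereInf T (C.map A) + ‖T‖ * (2 * δ) := by
  refine sphereInf_le_add_of_forall_exists_near T hC ?_
  rintro _ ⟨z, hz, rfl⟩ h1
  have hBz : B z ≠ 0 := fun h0 => by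
    have := hAB z
    rw [h0, zero_sub, norm_neg, h1] at this
    linarith
  refine ⟨NormedSpace.normalize (B z), C.map B |>.smul_mem _ (mem_map_of_mem hz),
    NormedSpace.norm_normalize_eq_one_iff.2 hBz, ?_⟩
  calc _ ≤ 2 * ‖B z - A z‖ := NormedSpace.norm_normalize_sub_le h1
    _ ≤ 2 * δ := by simpa [h1] using hAB z

theorem sphereInf_comp_subtypeL (P : Submodule ℝ X) (W : Submodule ℝ P) :
    sphereInf (T.comp P.subtypeL) W = sphereInf T (W.map P.subtype) := by
  unfold sphereInf
  congr 1
  ext s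
  constructor
  · rintro ⟨m, hm, hm1, rfl⟩
    exact ⟨m, mem_map_of_mem hm, hm1, rfl⟩
  · rintro ⟨_, ⟨m, hm, rfl⟩, hm1, rfl⟩
    exact ⟨m, hm, hm1, rfl⟩

theorem tauOn_comp_subtypeL (P : Submodule ℝ X) (M : Submodule ℝ P) :
    tauOn (T.comp P.subtypeL) M = tauOn T (M.map P.subtype) := by
  rw [tauOn, tauOn, ← image_map_subtype_setOf_le, Set.image_image]
  simp_rw [sphereInf_comp_subtypeL]

theorem opTau_comp_subtypeL (P : Submodule ℝ X) : opTau (T.comp P.subtypeL) = tauOn T P := by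
  have : opTau (T.comp P.subtypeL) = tauOn (T.comp P.subtypeL) ⊤ := by
    simp only [opTau, tauOn, le_top, true_and]
    congr 1
    ext
    simp [eq_comm]
  rw [this, tauOn_comp_subtypeL, map_subtype_top]

theorem opNabla_eq_sInf_tauOn : opNabla T = sInf (tauOn T '' {M | ¬ FiniteDimensional ℝ M}) := by
  simp only [opNabla, opTau_comp_subtypeL]
  congr 1
  ext
  simp [eq_comm]

theorem opNabla_comp_subtypeL (E : Submodule ℝ X) :
    opNabla (T.comp E.subtypeL) =
      sInf (tauOn T '' {M | M ≤ E ∧ ¬ FiniteDimensional ℝ M}) := by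
  have hset : {M | M ≤ E ∧ ¬ FiniteDimensional ℝ M} =
      map E.subtype '' {M : Submodule ℝ E | ¬ FiniteDimensional ℝ M} := by
    simpa using (image_map_subtype_setOf_le E ⊤).symm
  rw [opNabla_eq_sInf_tauOn, hset, Set.image_image]
  simp_rw [tauOn_comp_subtypeL]

theorem tauOn_nonneg (M : Submodule ℝ X) : 0 ≤ tauOn T M :=
  Real.sSup_nonneg (by rintro _ ⟨V, -, rfl⟩; exact sphereInf_nonneg T V)

theorem sphereInf_le_tauOn {V M : Submodule ℝ X} (hVM : V ≤ M) (hV : ¬ FiniteDimensional ℝ V) :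
    sphereInf T V ≤ tauOn T M := by
  refine le_csSup ⟨‖T‖, ?_⟩ ⟨V, ⟨hVM, hV⟩, rfl⟩
  rintro _ ⟨U, ⟨-, hU⟩, rfl⟩
  exact sphereInf_le_opNorm T (ne_bot_of_not_finiteDimensional hU)

theorem tauOn_mono {M N : Submodule ℝ X} (hMN : M ≤ N) : tauOn T M ≤ tauOn T N :=
  Real.sSup_le (by rintro _ ⟨V, ⟨hVM, hV⟩, rfl⟩; exact sphereInf_le_tauOn T (hVM.trans hMN) hV)
    (tauOn_nonneg T N)

theorem tauOn_range_le_add {Z : Type*} [AddCommGroup Z] [Module ℝ Z] {A B : Z →ₗ[ℝ] X}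
    {δ : ℝ} (hδ₀ : 0 ≤ δ) (hδ : δ < 1) (hAB : ∀ z, ‖B z - A z‖ ≤ δ * ‖A z‖)
    (hA : Function.Injective A) :
    tauOn T (LinearMap.range B) ≤ tauOn T (LinearMap.range A) + ‖T‖ * (2 * δ) := by
  refine Real.sSup_le ?_ (by have := tauOn_nonneg T (LinearMap.range A); positivity)
  rintro _ ⟨V, ⟨hVB, hV⟩, rfl⟩
  have hCV : (V.comap B).map B = V := map_comap_eq_self hVB
  have hC : ¬ FiniteDimensional ℝ ((V.comap B).map A) := by
    rw [finiteDimensional_map_iff_of_injective hA]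
    exact fun _ => hV (hCV ▸ Module.Finite.map _ B)
  calc sphereInf T V = sphereInf T ((V.comap B).map B) := by rw [hCV]
    _ ≤ sphereInf T ((V.comap B).map A) + ‖T‖ * (2 * δ) :=
        sphereInf_map_le_add T hδ hAB (ne_bot_of_not_finiteDimensional hC)
    _ ≤ tauOn T (LinearMap.range A) + ‖T‖ * (2 * δ) := by
        gcongr
        exact sphereInf_le_tauOn T LinearMap.map_le_range hC

theorem exists_le_tauOn_le_add {M E : Submodule ℝ X} (hM : ¬ FiniteDimensional ℝ M)
    (hE : Dense (E : Set X)) {ε : ℝ} (hε : 0 < ε) :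
    ∃ N ≤ E, ¬ FiniteDimensional ℝ N ∧ tauOn T N ≤ tauOn T M + ε := by
  obtain ⟨δ, hδ₀, hδ₁, hδε⟩ : ∃ δ : ℝ, 0 < δ ∧ δ < 1 ∧ ‖T‖ * (2 * δ) ≤ ε := by
    obtain ⟨c, hc₀, hcε⟩ := exists_pos_mul_lt hε (2 * ‖T‖)
    refine ⟨min c (1 / 2), by positivity, by linarith [min_le_right c (1 / 2)], ?_⟩
    nlinarith [min_le_left c (1 / 2), norm_nonneg T]
  obtain ⟨x, f, hxM, hxf⟩ := exists_biorthogonal_seq hM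
  obtain ⟨e, heE, he⟩ := hE.exists_seq_forall_sum_mul_norm_sub_le x (fun n => ‖f n‖) hδ₀
  have hAB := norm_linearCombination_sub_le hxf he
  have hA : Function.Injective (Finsupp.linearCombination ℝ x) :=
    linearIndependent_of_biorthogonal hxf
  have hB := injective_of_norm_sub_le_mul hδ₁ hAB hA
  have hAM : LinearMap.range (Finsupp.linearCombination ℝ x) ≤ M := by
    rw [Finsupp.range_linearCombination]
    exact span_le.2 (Set.range_subset_iff.2 hxM)
  refine ⟨LinearMap.range (Finsupp.linearCombination ℝ e), ?_, ?_, ?_⟩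
  · rw [Finsupp.range_linearCombination]
    exact span_le.2 (Set.range_subset_iff.2 heE)
  · intro hfin
    obtain h | h := Module.finite_finsupp_self_iff.1
      ((Module.Finite.equiv_iff (LinearEquiv.ofInjective _ hB)).2 hfin)
    · exact not_subsingleton ℝ h
    · exact not_finite ℕ
  · calc _ ≤ tauOn T (LinearMap.range (Finsupp.linearCombination ℝ x)) + ‖T‖ * (2 * δ) :=
          tauOn_range_le_add T hδ₀.le hδ₁ hAB hA
      _ ≤ tauOn T M + ε := add_le_add (tauOn_mono T hAM) hδε

end Tau

theorem nabla_densely_invariant_general {X Y : Type*} [NormedAddCommGroup X] [NormedSpace ℝ X]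
    [NormedAddCommGroup Y] [NormedSpace ℝ Y]
    (T : X →L[ℝ] Y) (E : Submodule ℝ X) (hE : Dense (E : Set X)) :
    opNabla (T.comp E.subtypeL) = opNabla T := by
  rw [opNabla_comp_subtypeL, opNabla_eq_sInf_tauOn]
  refine csInf_image_eq_of_forall_exists_le_add (fun M hM => hM.2) ⟨0, ?_⟩ fun M hM ε hε => ?_
  · rintro _ ⟨M, -, rfl⟩
    exact tauOn_nonneg T M
  · obtain ⟨N, hNE, hN, hNM⟩ := exists_le_tauOn_le_add T hM hE hε
    exact ⟨N, ⟨hNE, hN⟩, hNM⟩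

/-- `∇` is densely invariant: `∇(T|_E) = ∇(T)` for any dense subspace `E`. -/
theorem nabla_densely_invariant {X Y : Type*} [NormedAddCommGroup X] [NormedSpace ℝ X]
    [NormedAddCommGroup Y] [NormedSpace ℝ Y] (hX : ¬ FiniteDimensional ℝ X)
    (T : X →L[ℝ] Y) (E : Submodule ℝ X) (hE : Dense (E : Set X)) :
    opNabla (T.comp E.subtypeL) = opNabla T :=
  nabla_densely_invariant_general T E hE
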